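/- Let f ∈ Hol(α) be a bounded α-Hölder potential. Then the family of ratios of iterates at the constant function 1 is uniformly bounded: sup{ L_f^n 1(x) / L_f^n 1(y) : n ∈ ℕ, x ∈ X, y ∈ X } < ∞. -/

import Mathlib

/-!
The ratios are controlled by a cone of positive functions that `L_f` preserves: those with
`g x ≤ exp (K · d_X(x,y)^α) · g y`. Prepending a common symbol halves `d_X`, so if `f` is
`α`-Hölder with constant `C` and `g` lies in the cone with constant `K`, then `L_f g` lies in it
with constant `(C + K) 2^{-α}`. The constant `K = C 2^{-α} / (1 - 2^{-α})` is a fixed point of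
this map, so every `L_f^n 1` lies in the cone for `K`, and since `d_X ≤ 1` all ratios are
bounded by `e^K`.
-/

open MeasureTheory Filter Topology BoundedContinuousFunction

noncomputable section

variable {E : Type*} [MetricSpace E]

/-- The metric on the sequence space `X = E^ℕ`:
`d_X(x,y) = ∑_{n=1}^∞ 2⁻ⁿ · min(d_E(x_n,y_n), 1)`. -/
def dX (x y : ℕ → E) : ℝ :=
  ∑' n : ℕ, ((1 : ℝ) / 2) ^ (n + 1) * min (dist (x n) (y n)) 1

/-- The left shift `σ(x₁,x₂,x₃,…) = (x₂,x₃,…)`. -/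
def shift (x : ℕ → E) : ℕ → E := fun n => x (n + 1)

theorem continuous_shift : Continuous (shift (E := E)) :=
  continuous_pi fun n => continuous_apply (n + 1)

/-- Prepending one symbol: `ax = (a, x₁, x₂, …)`. -/
def cons (a : E) (x : ℕ → E) : ℕ → E := fun n => Nat.casesOn n a x

/-- Prepending a finite word `a = (a₁,…,a_n)`. -/
def prepend {n : ℕ} (a : Fin n → E) (x : ℕ → E) : ℕ → E :=
  fun k => if h : k < n then a ⟨k, h⟩ else x (k - n)

/-- Birkhoff sums `f_n = ∑_{k=0}^{n-1} f ∘ σᵏ`. -/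
def birkhoff (f : (ℕ → E) → ℝ) (n : ℕ) (x : ℕ → E) : ℝ :=
  ∑ k ∈ Finset.range n, f (shift^[k] x)

/-- Boundedness of a real-valued function on `X`. -/
def Bdd (g : (ℕ → E) → ℝ) : Prop := ∃ M : ℝ, ∀ x, |g x| ≤ M

/-- `g` is `α`-Hölder with constant `C` (w.r.t. the metric `dX`). -/
def HolderConst (α C : ℝ) (g : (ℕ → E) → ℝ) : Prop :=
  ∀ x y, |g x - g y| ≤ C * dX x y ^ α

/-- `g ∈ Hol(α)`: bounded, continuous and `α`-Hölder. -/
def MemHol (α : ℝ) (g : (ℕ → E) → ℝ) : Prop :=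
  Continuous g ∧ Bdd g ∧ ∃ C : ℝ, HolderConst α C g

/-- `g ∈ C_b(X,ℝ)`: bounded and continuous. -/
def MemCb (g : (ℕ → E) → ℝ) : Prop := Continuous g ∧ Bdd g

/-- The Hölder seminorm `D_α(g) = sup_{x ≠ y} |g x - g y| / d_X(x,y)^α`. -/
def Dalpha (α : ℝ) (g : (ℕ → E) → ℝ) : ℝ :=
  sSup {r : ℝ | ∃ x y : ℕ → E, x ≠ y ∧ r = |g x - g y| / dX x y ^ α}

/-- The supremum norm `‖g‖_∞`. -/
def supNorm (g : (ℕ → E) → ℝ) : ℝ := ⨆ x : ℕ → E, |g x|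

/-- The Hölder norm `‖g‖_α = ‖g‖_∞ + D_α(g)`. -/
def alphaNorm (α : ℝ) (g : (ℕ → E) → ℝ) : ℝ := supNorm g + Dalpha α g

variable [MeasurableSpace E] [BorelSpace E]

/-- The Ruelle transfer operator `L_f φ(x) = ∫_E e^{f(ax)} φ(ax) dp(a)`. -/
def ruelle (p : Measure E) (f φ : (ℕ → E) → ℝ) : (ℕ → E) → ℝ :=
  fun x => ∫ a, Real.exp (f (cons a x)) * φ (cons a x) ∂p

/-- The normalized operators `P^m_n(φ) = L_f^m(φ · L_f^n 1) / L_f^{m+n} 1`. -/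
def Pmn (p : Measure E) (f : (ℕ → E) → ℝ) (m n : ℕ) (φ : (ℕ → E) → ℝ) : (ℕ → E) → ℝ :=
  fun x => (ruelle p f)^[m] (fun y => φ y * (ruelle p f)^[n] (fun _ => 1) y) x /
    (ruelle p f)^[m + n] (fun _ => 1) x

/-- The equivalent bounded metric `d̄(x,y) = min{1, 4 C_f d_X(x,y)^α}`. -/
def dbar (Cf α : ℝ) (x y : ℕ → E) : ℝ := min 1 (4 * Cf * dX x y ^ α)

/-- The Wasserstein distance associated to `d̄`, via Kantorovich duality. -/
def wass (Cf α : ℝ) (μ₁ μ₂ : Measure (ℕ → E)) : ℝ :=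
  sSup {r : ℝ | ∃ g : (ℕ → E) → ℝ,
    (∀ x y, |g x - g y| ≤ dbar Cf α x y) ∧ r = (∫ x, g x ∂μ₁) - ∫ x, g x ∂μ₂}

section SequenceSpace

variable {E : Type*}

lemma cons_zero (a : E) (x : ℕ → E) : cons a x 0 = a := rfl

lemma cons_succ (a : E) (x : ℕ → E) (n : ℕ) : cons a x (n + 1) = x n := rfl

lemma measurable_cons [MeasurableSpace E] : Measurable fun q : E × (ℕ → E) => cons q.1 q.2 :=
  measurable_pi_lambda _ fun n => by
    cases n with
    | zero => exact measurable_fst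
    | succ n => exact (measurable_pi_apply n).comp measurable_snd

variable [MetricSpace E]

lemma tsum_half_pow_succ : ∑' n : ℕ, ((1 : ℝ) / 2) ^ (n + 1) = 1 := by
  simp_rw [pow_succ, tsum_mul_right, tsum_geometric_two]
  norm_num

lemma dX_term_nonneg (x y : ℕ → E) (n : ℕ) :
    0 ≤ ((1 : ℝ) / 2) ^ (n + 1) * min (dist (x n) (y n)) 1 :=
  mul_nonneg (by positivity) (le_min dist_nonneg zero_le_one)

lemma dX_term_le (x y : ℕ → E) (n : ℕ) :
    ((1 : ℝ) / 2) ^ (n + 1) * min (dist (x n) (y n)) 1 ≤ ((1 : ℝ) / 2) ^ (n + 1) :=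
  mul_le_of_le_one_right (by positivity) (min_le_right _ _)

lemma summable_dX (x y : ℕ → E) :
    Summable fun n : ℕ => ((1 : ℝ) / 2) ^ (n + 1) * min (dist (x n) (y n)) 1 :=
  (summable_geometric_two.mul_right (1 / 2)).of_nonneg_of_le (dX_term_nonneg x y)
    fun n => (dX_term_le x y n).trans_eq (pow_succ _ n)

lemma dX_nonneg (x y : ℕ → E) : 0 ≤ dX x y :=
  tsum_nonneg (dX_term_nonneg x y)

lemma dX_le_one (x y : ℕ → E) : dX x y ≤ 1 :=
  (Summable.tsum_le_tsum (dX_term_le x y) (summable_dX x y)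
    ((summable_geometric_two.mul_right (1 / 2)).congr fun n => (pow_succ _ n).symm)).trans_eq
    tsum_half_pow_succ

lemma dX_cons (a : E) (x y : ℕ → E) : dX (cons a x) (cons a y) = dX x y / 2 := by
  have htail (n : ℕ) :
      ((1 : ℝ) / 2) ^ (n + 1 + 1) * min (dist (cons a x (n + 1)) (cons a y (n + 1))) 1 =
        1 / 2 * (((1 : ℝ) / 2) ^ (n + 1) * min (dist (x n) (y n)) 1) := by
    rw [cons_succ, cons_succ, pow_succ]; ring
  rw [dX, (summable_dX _ _).tsum_eq_zero_add, tsum_congr htail, tsum_mul_left, dX]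
  simp only [cons_zero, dist_self, min_eq_left zero_le_one, mul_zero, zero_add]
  ring

lemma HolderConst.mono {α C C' : ℝ} {g : (ℕ → E) → ℝ} (h : HolderConst α C g)
    (hC : C ≤ C') : HolderConst α C' g := fun x y =>
  (h x y).trans (mul_le_mul_of_nonneg_right hC (Real.rpow_nonneg (dX_nonneg x y) α))

end SequenceSpace

section Ruelle

variable {E : Type*} [MeasurableSpace E] {p : Measure E} {f g : (ℕ → E) → ℝ}

lemma measurable_ruelle [SFinite p] (hf : Measurable f) (hg : Measurable g) :
    Measurable (ruelle p f g) := by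
  have hc : Measurable fun q : (ℕ → E) × E => cons q.2 q.1 :=
    measurable_cons.comp measurable_swap
  exact ((hf.comp hc).exp.mul (hg.comp hc)).stronglyMeasurable.integral_prod_right'.measurable

lemma integrable_ruelle_integrand [IsFiniteMeasure p] {M B : ℝ} (hf : Measurable f)
    (hfM : ∀ z, f z ≤ M) (hg : Measurable g) (hgB : ∀ z, |g z| ≤ B) (x : ℕ → E) :
    Integrable (fun a => Real.exp (f (cons a x)) * g (cons a x)) p := by
  have hc : Measurable fun a : E => cons a x :=
    measurable_cons.comp (measurable_id.prodMk measurable_const)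
  refine (integrable_const (Real.exp M * B)).mono'
    ((hf.comp hc).exp.mul (hg.comp hc)).aestronglyMeasurable (ae_of_all _ fun a => ?_)
  rw [norm_mul, Real.norm_eq_abs, Real.abs_exp, Real.norm_eq_abs]
  exact mul_le_mul (Real.exp_le_exp.2 (hfM _)) (hgB _) (abs_nonneg _) (Real.exp_pos _).le

lemma ruelle_bounds [IsProbabilityMeasure p] {M b c : ℝ} (hf : Measurable f)
    (hfM : ∀ z, |f z| ≤ M) (hg : Measurable g) (hc : 0 ≤ c) (hgc : ∀ z, c ≤ g z)
    (hgb : ∀ z, g z ≤ b) (x : ℕ → E) :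
    Real.exp (-M) * c ≤ ruelle p f g x ∧ ruelle p f g x ≤ Real.exp M * b := by
  have hg0 : ∀ z, 0 ≤ g z := fun z => hc.trans (hgc z)
  have hint := integrable_ruelle_integrand (p := p) hf (fun z => (le_abs_self _).trans (hfM z)) hg
    (fun z => (abs_of_nonneg (hg0 z)).trans_le (hgb z)) x
  constructor
  · simpa [ruelle] using integral_mono (integrable_const _) hint fun a =>
      mul_le_mul (Real.exp_le_exp.2 (neg_le_of_abs_le (hfM _))) (hgc _) hc (Real.exp_pos _).le
  · simpa [ruelle] using integral_mono hint (integrable_const _) fun a =>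
      mul_le_mul (Real.exp_le_exp.2 (le_of_abs_le (hfM _))) (hgb _) (hg0 _) (Real.exp_pos _).le

lemma iterate_ruelle_one_bounds [IsProbabilityMeasure p] {M : ℝ} (hf : Measurable f)
    (hfM : ∀ z, |f z| ≤ M) (n : ℕ) :
    Measurable ((ruelle p f)^[n] fun _ => 1) ∧ ∀ x,
      Real.exp (-(n * M)) ≤ (ruelle p f)^[n] (fun _ => 1) x ∧
        (ruelle p f)^[n] (fun _ => 1) x ≤ Real.exp (n * M) := by
  induction n with
  | zero => simp
  | succ n ih =>
    obtain ⟨hmeas, hb⟩ := ih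
    rw [Function.iterate_succ']
    refine ⟨measurable_ruelle hf hmeas, fun x => ?_⟩
    have := ruelle_bounds (p := p) hf hfM hmeas (Real.exp_pos _).le (fun z => (hb z).1)
      (fun z => (hb z).2) x
    simpa [← Real.exp_add, add_mul, add_comm] using this

end Ruelle

section Cone

variable {E : Type*} [MetricSpace E] {α K : ℝ} {g : (ℕ → E) → ℝ}

def LogHolderWith (α K : ℝ) (g : (ℕ → E) → ℝ) : Prop :=
  ∀ x y, g x ≤ Real.exp (K * dX x y ^ α) * g y

lemma LogHolderWith.le_exp_mul (h : LogHolderWith α K g)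
    (hα : 0 ≤ α) (hK : 0 ≤ K) (x : ℕ → E) {y : ℕ → E} (hy : 0 ≤ g y) :
    g x ≤ Real.exp K * g y :=
  (h x y).trans <| mul_le_mul_of_nonneg_right (Real.exp_le_exp.2 <|
    mul_le_of_le_one_right hK (Real.rpow_le_one (dX_nonneg x y) (dX_le_one x y) hα)) hy

lemma LogHolderWith.ruelle [MeasurableSpace E] {p : Measure E} [IsFiniteMeasure p]
    {f : (ℕ → E) → ℝ} {C M b : ℝ} (h : LogHolderWith α K g) (hf : Measurable f)
    (hfM : ∀ z, f z ≤ M) (hfC : HolderConst α C f) (hg : Measurable g) (hg0 : ∀ z, 0 ≤ g z)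
    (hgb : ∀ z, g z ≤ b) : LogHolderWith α ((C + K) * (1 / 2) ^ α) (ruelle p f g) := by
  intro x y
  have hint := integrable_ruelle_integrand (p := p) hf hfM hg
    (fun z => (abs_of_nonneg (hg0 z)).trans_le (hgb z))
  have hpt (a : E) : Real.exp (f (cons a x)) * g (cons a x) ≤
      Real.exp ((C + K) * (1 / 2) ^ α * dX x y ^ α) *
        (Real.exp (f (cons a y)) * g (cons a y)) := by
    have hd : dX (cons a x) (cons a y) ^ α = dX x y ^ α * (1 / 2) ^ α := by
      rw [dX_cons, div_eq_mul_one_div, Real.mul_rpow (dX_nonneg x y) (by norm_num)]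
    have hfx : f (cons a x) ≤ C * dX (cons a x) (cons a y) ^ α + f (cons a y) := by
      linarith [le_of_abs_le (hfC (cons a x) (cons a y))]
    calc Real.exp (f (cons a x)) * g (cons a x)
        ≤ Real.exp (C * dX (cons a x) (cons a y) ^ α + f (cons a y)) *
            (Real.exp (K * dX (cons a x) (cons a y) ^ α) * g (cons a y)) :=
          mul_le_mul (Real.exp_le_exp.2 hfx) (h _ _) (hg0 _) (Real.exp_pos _).le
      _ = _ := by
          rw [hd, show (C + K) * (1 / 2) ^ α * dX x y ^ α =
            C * (dX x y ^ α * (1 / 2) ^ α) + K * (dX x y ^ α * (1 / 2) ^ α) by ring,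
            Real.exp_add, Real.exp_add]
          ring
  simpa [_root_.ruelle, integral_const_mul] using
    integral_mono (hint x) ((hint y).const_mul _) hpt

lemma iterate_ruelle_one_logHolderWith [MeasurableSpace E] {p : Measure E}
    [IsProbabilityMeasure p] {f : (ℕ → E) → ℝ} {C M : ℝ} (hf : Measurable f)
    (hfM : ∀ z, |f z| ≤ M) (hfC : HolderConst α C f) (hK : 0 ≤ K)
    (hfix : (C + K) * (1 / 2) ^ α = K) (n : ℕ) :
    LogHolderWith α K ((ruelle p f)^[n] fun _ => 1) := by
  induction n with
  | zero => exact fun x y => by simpa using mul_nonneg hK (Real.rpow_nonneg (dX_nonneg x y) α)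
  | succ n ih =>
    obtain ⟨hmeas, hb⟩ := iterate_ruelle_one_bounds (p := p) hf hfM n
    rw [Function.iterate_succ', Function.comp_apply, ← hfix]
    exact ih.ruelle hf (fun z => le_of_abs_le (hfM z)) hfC hmeas
      (fun z => (Real.exp_pos _).le.trans (hb z).1) (fun z => (hb z).2)

end Cone

theorem statement6_general {E : Type*} [MetricSpace E]
    [TopologicalSpace.SeparableSpace E] [MeasurableSpace E] [BorelSpace E]
    (p : Measure E) [IsProbabilityMeasure p]
    (α : ℝ) (hα0 : 0 < α)
    (f : (ℕ → E) → ℝ) (hf : MemHol α f) :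
    ∃ K : ℝ, ∀ (n : ℕ) (x y : ℕ → E),
      (ruelle p f)^[n] (fun _ => 1) x / (ruelle p f)^[n] (fun _ => 1) y ≤ K := by
  obtain ⟨hfc, ⟨M, hfM⟩, C₀, hfC₀⟩ := hf
  set C := max C₀ 0
  set t : ℝ := (1 / 2) ^ α
  have ht : t < 1 := Real.rpow_lt_one (by norm_num) (by norm_num) hα0
  set K := C * t / (1 - t)
  have hK : 0 ≤ K := div_nonneg (mul_nonneg (le_max_right _ _) (by positivity)) (by linarith)
  have hfix : (C + K) * t = K := by
    have : 1 - t ≠ 0 := by linarith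
    simp only [K]
    field_simp
    ring
  have hcone := iterate_ruelle_one_logHolderWith (p := p) hfc.measurable hfM
    (hfC₀.mono (le_max_left C₀ 0)) hK hfix
  refine ⟨Real.exp K, fun n x y => ?_⟩
  have hpos : 0 < (ruelle p f)^[n] (fun _ => 1) y :=
    (Real.exp_pos _).trans_le ((iterate_ruelle_one_bounds hfc.measurable hfM n).2 y).1
  rw [div_le_iff₀ hpos]
  exact (hcone n).le_exp_mul hα0.le hK x hpos.le

/-- Uniform boundedness of the ratios
`L_f^n 1(x) / L_f^n 1(y)` over all `n`, `x`, `y`. -/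
theorem statement6 {E : Type*} [MetricSpace E] [CompleteSpace E]
    [TopologicalSpace.SeparableSpace E] [MeasurableSpace E] [BorelSpace E] [Nonempty E]
    (p : Measure E) [IsProbabilityMeasure p]
    (α : ℝ) (hα0 : 0 < α) (hα1 : α < 1)
    (f : (ℕ → E) → ℝ) (hf : MemHol α f) :
    ∃ K : ℝ, ∀ (n : ℕ) (x y : ℕ → E),
      (ruelle p f)^[n] (fun _ => 1) x / (ruelle p f)^[n] (fun _ => 1) y ≤ K :=
  statement6_general p α hα0 f hf

end
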